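/- Let A be an n×n strictly accretive matrix that is not Hermitian. Then the block matrix [[A, I],[I, A⁻¹]] is not accretive. -/

import Mathlib

open MeasureTheory Matrix
open scoped ComplexOrder

/-- The "real part" (Hermitian part) of a complex matrix: `(A + Aᴴ)/2`. -/
noncomputable def mre {m : Type*} (A : Matrix m m ℂ) : Matrix m m ℂ :=
  (1/2 : ℂ) • (A + Aᴴ)

/-- A matrix is accretive if its Hermitian part is positive semidefinite. -/
def Accretive {m : Type*} [Fintype m] (A : Matrix m m ℂ) : Prop :=
  (mre A).PosSemidef

/-- Principal fractional power `A ^ t` of a matrix whose spectrum avoids `(-∞, 0]`,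
given (for `0 < t < 1`) by the standard integral formula
`A^t = (sin (tπ)/π) ∫₀^∞ s^(t-1) A (A + s I)⁻¹ ds`. -/
noncomputable def apow {m : Type*} [Fintype m] [DecidableEq m]
    (A : Matrix m m ℂ) (t : ℝ) : Matrix m m ℂ :=
  if t = 0 then 1 else if t = 1 then A else
    Matrix.of fun i j => ∫ s in Set.Ioi (0 : ℝ),
      (((Real.sin (t * Real.pi) / Real.pi) * s ^ (t - 1)) •
        (A * (A + (s : ℂ) • (1 : Matrix m m ℂ))⁻¹)) i j

/-- The weighted geometric mean `A ♯ₜ B = A^(1/2) (A^(-1/2) B A^(-1/2))^t A^(1/2)`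
of (strictly accretive) matrices. -/
noncomputable def gmean {m : Type*} [Fintype m] [DecidableEq m]
    (A : Matrix m m ℂ) (t : ℝ) (B : Matrix m m ℂ) : Matrix m m ℂ :=
  apow A (1/2) * apow ((apow A (1/2))⁻¹ * B * (apow A (1/2))⁻¹) t * apow A (1/2)

/-- The absolute value `|X| = (Xᴴ X)^(1/2)` of a matrix. -/
noncomputable def absM {m : Type*} [Fintype m] [DecidableEq m]
    (X : Matrix m m ℂ) : Matrix m m ℂ :=
  ((Matrix.posSemidef_conjTranspose_mul_self X).1.eigenvectorUnitary : Matrix m m ℂ) *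
    Matrix.diagonal ((↑) ∘ Real.sqrt ∘ (Matrix.posSemidef_conjTranspose_mul_self X).1.eigenvalues) *
    (star (Matrix.posSemidef_conjTranspose_mul_self X).1.eigenvectorUnitary : Matrix m m ℂ)

/-- The `j`-th largest singular value of a complex matrix. -/
noncomputable def singVals {k : ℕ} (T : Matrix (Fin k) (Fin k) ℂ) (j : Fin k) : ℝ :=
  Real.sqrt (((Matrix.posSemidef_conjTranspose_mul_self T).1.eigenvalues ∘
    Tuple.sort (Matrix.posSemidef_conjTranspose_mul_self T).1.eigenvalues) j.rev)

/-- The `j`-th largest eigenvalue of a Hermitian matrix (junk value `0` otherwise). -/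
noncomputable def eigDesc {k : ℕ} (T : Matrix (Fin k) (Fin k) ℂ) (j : Fin k) : ℝ :=
  if h : T.IsHermitian then (h.eigenvalues ∘ Tuple.sort h.eigenvalues) j.rev else 0

/-- The numerical range of `A` lies in the sector
`S_α = {z : Re z ≥ 0, |Im z| ≤ tan α · Re z}`. -/
def InSector {k : ℕ} (α : ℝ) (A : Matrix (Fin k) (Fin k) ℂ) : Prop :=
  ∀ x : EuclideanSpace ℂ (Fin k), ‖x‖ = 1 →
    0 ≤ (star (x : Fin k → ℂ) ⬝ᵥ A.mulVec (x : Fin k → ℂ)).re ∧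
      |(star (x : Fin k → ℂ) ⬝ᵥ A.mulVec (x : Fin k → ℂ)).im| ≤
        Real.tan α * (star (x : Fin k → ℂ) ⬝ᵥ A.mulVec (x : Fin k → ℂ)).re

/-! Write `A = H + K` with `H = Re A > 0` and `K = A - H` skew-Hermitian. By the Schur complement,
accretivity of `[[A, I], [I, A⁻¹]]` says `Re (A⁻¹) ≥ H⁻¹`. On the other hand
`Re (A⁻¹) = A⁻¹ H A⁻ᴴ` and `A H⁻¹ Aᴴ = H + Kᴴ H⁻¹ K`, so
`H⁻¹ - Re (A⁻¹) = A⁻¹ (Kᴴ H⁻¹ K) A⁻ᴴ ≥ 0`. Together these force `Kᴴ H⁻¹ K = 0`, hence `K = 0`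
and `A` is Hermitian. -/

namespace Matrix

theorem PosDef.eq_zero_of_posSemidef_neg_conjTranspose_mul_mul {R m n : Type*} [Ring R]
    [PartialOrder R] [StarRing R] [IsOrderedAddMonoid R] [Fintype m] [DecidableEq m] [Fintype n]
    {P : Matrix n n R} {K : Matrix n m R}
    (hP : P.PosDef) (h : (-(Kᴴ * P * K)).PosSemidef) : K = 0 := by
  have hcol : ∀ v, K *ᵥ v = 0 := fun v => by
    by_contra hKv
    have hpos := hP.dotProduct_mulVec_pos hKv
    have hnonneg := h.dotProduct_mulVec_nonneg v
    rw [neg_mulVec, dotProduct_neg, ← mulVec_mulVec, ← mulVec_mulVec, dotProduct_mulVec,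
      ← star_mulVec, neg_nonneg] at hnonneg
    exact hnonneg.not_gt hpos
  ext i j
  simpa using congrFun (hcol (Pi.single j 1)) i

end Matrix

section

variable {m : Type*}

theorem isHermitian_mre (A : Matrix m m ℂ) : (mre A).IsHermitian := by
  rw [IsHermitian, mre, conjTranspose_smul, conjTranspose_add, conjTranspose_conjTranspose,
    add_comm]
  norm_num

theorem conjTranspose_eq_mre_sub (A : Matrix m m ℂ) : Aᴴ = mre A - (A - mre A) := by
  ext i j
  simp only [mre, Matrix.sub_apply, Matrix.smul_apply, Matrix.add_apply, smul_eq_mul]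
  ring

theorem conjTranspose_sub_mre (A : Matrix m m ℂ) : (A - mre A)ᴴ = -(A - mre A) := by
  rw [conjTranspose_sub, (isHermitian_mre A).eq, conjTranspose_eq_mre_sub]
  abel

theorem mre_fromBlocks_one [DecidableEq m] (A D : Matrix m m ℂ) :
    mre (fromBlocks A 1 1 D) = fromBlocks (mre A) 1 1 (mre D) := by
  rw [mre, fromBlocks_conjTranspose, fromBlocks_add, fromBlocks_smul, conjTranspose_one,
    ← two_smul ℂ (1 : Matrix m m ℂ), smul_smul]
  norm_num [mre]

variable [Fintype m] [DecidableEq m]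

theorem Accretive.posSemidef_mre_sub_inv_mre {A D : Matrix m m ℂ} (hA : (mre A).PosDef)
    (h : Accretive (fromBlocks A 1 1 D)) : (mre D - (mre A)⁻¹).PosSemidef := by
  have : Invertible (mre A) := hA.isUnit.invertible
  have := (PosDef.fromBlocks₁₁ 1 (mre D) hA).1
  rw [conjTranspose_one, ← mre_fromBlocks_one] at this
  simpa using this h

theorem isUnit_det_of_posDef_mre {A : Matrix m m ℂ} (hA : (mre A).PosDef) : IsUnit A.det := by
  rw [isUnit_iff_ne_zero, Ne, ← exists_mulVec_eq_zero_iff]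
  rintro ⟨v, hv, hAv⟩
  have hpos := hA.dotProduct_mulVec_pos hv
  rw [mre, smul_mulVec, add_mulVec, hAv, dotProduct_smul, dotProduct_add, dotProduct_mulVec,
    ← star_mulVec, hAv] at hpos
  simp at hpos

theorem mre_nonsing_inv {A : Matrix m m ℂ} (hA : IsUnit A.det) :
    mre A⁻¹ = A⁻¹ * mre A * A⁻¹ᴴ := by
  have hAH : IsUnit Aᴴ.det := by rw [det_conjTranspose]; exact hA.star
  rw [mre, mre, Matrix.mul_smul, Matrix.smul_mul, mul_add, add_mul, nonsing_inv_mul A hA,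
    one_mul, conjTranspose_nonsing_inv, mul_assoc, mul_nonsing_inv _ hAH, mul_one, add_comm]

theorem mul_inv_mre_mul_conjTranspose {A : Matrix m m ℂ} (hH : IsUnit (mre A).det) :
    A * (mre A)⁻¹ * Aᴴ = mre A + (A - mre A)ᴴ * (mre A)⁻¹ * (A - mre A) := by
  rw [conjTranspose_sub_mre, conjTranspose_eq_mre_sub]
  set H := mre A
  set K := A - H
  calc A * H⁻¹ * (H - K) = (H + K) * H⁻¹ * (H - K) := by rw [add_sub_cancel]
    _ = H + -K * H⁻¹ * K := by
        have hKH : K * H⁻¹ * H = K := by rw [mul_assoc, nonsing_inv_mul _ hH, mul_one]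
        rw [add_mul, add_mul, mul_nonsing_inv _ hH, one_mul, mul_sub, hKH, neg_mul, neg_mul]
        abel

theorem mre_nonsing_inv_sub_inv_mre {A : Matrix m m ℂ} (hA : IsUnit A.det)
    (hH : IsUnit (mre A).det) :
    mre A⁻¹ - (mre A)⁻¹ = A⁻¹ * -((A - mre A)ᴴ * (mre A)⁻¹ * (A - mre A)) * A⁻¹ᴴ := by
  have hAH : IsUnit Aᴴ.det := by rw [det_conjTranspose]; exact hA.star
  have hcancel : A⁻¹ * (A * (mre A)⁻¹ * Aᴴ) * A⁻¹ᴴ = (mre A)⁻¹ := by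
    rw [conjTranspose_nonsing_inv, ← mul_assoc, ← mul_assoc, nonsing_inv_mul _ hA, one_mul,
      mul_assoc, mul_nonsing_inv _ hAH, mul_one]
  rw [mul_inv_mre_mul_conjTranspose hH, mul_add, add_mul] at hcancel
  rw [mre_nonsing_inv hA, eq_sub_of_add_eq hcancel, mul_neg, neg_mul]
  abel

end

/-- If `A` is strictly accretive and not Hermitian, then
`[[A, I], [I, A⁻¹]]` is not accretive. -/
theorem stmt3 {n : ℕ} (A : Matrix (Fin n) (Fin n) ℂ)
    (hA : (mre A).PosDef) (hnh : ¬ A.IsHermitian) :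
    ¬ Accretive (Matrix.fromBlocks A (1 : Matrix (Fin n) (Fin n) ℂ)
      (1 : Matrix (Fin n) (Fin n) ℂ) A⁻¹) := by
  intro hacc
  have hdet : IsUnit A.det := isUnit_det_of_posDef_mre hA
  have hinv : IsUnit A⁻¹ := isUnit_nonsing_inv_iff.2 ((isUnit_iff_isUnit_det A).2 hdet)
  have hgap := hacc.posSemidef_mre_sub_inv_mre hA
  rw [mre_nonsing_inv_sub_inv_mre hdet ((isUnit_iff_isUnit_det _).1 hA.isUnit)] at hgap
  have hskew : A - mre A = 0 := hA.inv.eq_zero_of_posSemidef_neg_conjTranspose_mul_mul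
    ((IsUnit.posSemidef_star_right_conjugate_iff hinv).1 hgap)
  exact hnh (sub_eq_zero.1 hskew ▸ hA.isHermitian)
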